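/- If the infimum value of a linear function cᵀ x over a nonempty rational generalized polyhedron Q = {x : A x ≥ a, B x > b} is finite, then it equals the infimum of cᵀ x over the closure {x : A x ≥ a, B x ≥ b}, and in particular this common value is rational. -/

import Mathlib

/-!
Fourier–Motzkin elimination shows that the projection of a polyhedron cut out by finitely many
rational inequalities is again such a polyhedron. Projecting the graph `{(c·x, x) : x ∈ P}` of the
objective onto its first coordinate, the set of values of `c·x` on the closed polyhedron `P` is a
rational polyhedron in the line; when it is bounded below its least element is therefore a rational
number `β/α` read off from one of its inequalities.

The strict polyhedron `Q` is nonempty, so every `x ∈ P` is a limit of points of the open segment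
from `x` to a point of `Q`, all of which lie in `Q`. Hence `P ⊆ closure Q`, and the continuous
objective has the same infimum on `Q` and on `P`.
-/

open scoped Matrix

theorem Finite.exists_between_of_forall_le {α ι κ : Type*} [LinearOrder α] [Nonempty α]
    [Finite ι] [Finite κ] {f : ι → α} {g : κ → α} (h : ∀ i j, f i ≤ g j) :
    ∃ c, (∀ i, f i ≤ c) ∧ ∀ j, c ≤ g j := by
  cases isEmpty_or_nonempty ι with
  | inr _ =>
    obtain ⟨i, hi⟩ := Finite.exists_max f
    exact ⟨f i, hi, h i⟩
  | inl _ =>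
    cases isEmpty_or_nonempty κ with
    | inr _ =>
      obtain ⟨j, hj⟩ := Finite.exists_min g
      exact ⟨g j, isEmptyElim, hj⟩
    | inl _ => exact ⟨Classical.arbitrary α, isEmptyElim, isEmptyElim⟩

def ratPolyhedron (𝕜 : Type*) [DivisionRing 𝕜] [LE 𝕜] {σ ι : Type*} [Fintype ι]
    (A : Matrix σ ι ℚ) (b : σ → ℚ) : Set (ι → 𝕜) :=
  {x | ∀ k, (b k : 𝕜) ≤ ∑ j, (A k j : 𝕜) * x j}

theorem mem_ratPolyhedron {𝕜 σ ι : Type*} [DivisionRing 𝕜] [LE 𝕜] [Fintype ι]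
    {A : Matrix σ ι ℚ} {b : σ → ℚ} {x : ι → 𝕜} :
    x ∈ ratPolyhedron 𝕜 A b ↔ ∀ k, (b k : 𝕜) ≤ ∑ j, (A k j : 𝕜) * x j :=
  Iff.rfl

variable {𝕜 : Type*} [Field 𝕜] [LinearOrder 𝕜] [IsStrictOrderedRing 𝕜]

theorem exists_forall_le_mul_iff {σ : Type*} [Finite σ] (a c : σ → 𝕜) :
    (∃ s, ∀ k, c k ≤ a k * s) ↔
      (∀ k, a k = 0 → c k ≤ 0) ∧ ∀ k l, 0 < a k → a l < 0 → a k * c l ≤ a l * c k := by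
  constructor
  · rintro ⟨s, hs⟩
    refine ⟨fun k hk => by simpa [hk] using hs k, fun k l hk hl => ?_⟩
    nlinarith [mul_le_mul_of_nonneg_left (hs l) hk.le, mul_le_mul_of_nonpos_left (hs k) hl.le]
  · rintro ⟨hzero, hpair⟩
    obtain ⟨s, hlow, hup⟩ := Finite.exists_between_of_forall_le
      (f := fun k : {k // 0 < a k} => c k / a k) (g := fun l : {l // a l < 0} => c l / a l)
      fun k l => by
        rw [div_le_iff₀ k.2, div_mul_eq_mul_div, le_div_iff_of_neg l.2]
        linarith [hpair k l k.2 l.2]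
    refine ⟨s, fun k => ?_⟩
    rcases lt_trichotomy (a k) 0 with hk | hk | hk
    · have := hup ⟨k, hk⟩
      rwa [le_div_iff_of_neg hk, mul_comm] at this
    · simpa [hk] using hzero k hk
    · have := hlow ⟨k, hk⟩
      rwa [div_le_iff₀ hk, mul_comm] at this

namespace FourierMotzkin

variable {σ : Type} {n : ℕ} (A : Matrix σ (Fin (n + 1)) ℚ) (b : σ → ℚ)

def Index : Type :=
  {k // A k (Fin.last n) = 0} ⊕
    {kl : σ × σ // 0 < A kl.1 (Fin.last n) ∧ A kl.2 (Fin.last n) < 0}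

instance [Finite σ] : Finite (Index A) := by unfold Index; infer_instance

def elimMatrix : Matrix (Index A) (Fin n) ℚ
  | .inl k, j => A k j.castSucc
  | .inr ⟨(k, l), _⟩, j => A k (Fin.last n) * A l j.castSucc - A l (Fin.last n) * A k j.castSucc

def elimVec : Index A → ℚ
  | .inl k => b k
  | .inr ⟨(k, l), _⟩ => A k (Fin.last n) * b l - A l (Fin.last n) * b k

theorem image_init_ratPolyhedron [Finite σ] :
    Fin.init '' ratPolyhedron 𝕜 A b = ratPolyhedron 𝕜 (elimMatrix A) (elimVec A b) := by
  ext y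
  set R : σ → 𝕜 := fun k => ∑ j : Fin n, (A k j.castSucc : 𝕜) * y j
  have hsnoc : ∀ s, Fin.snoc y s ∈ ratPolyhedron 𝕜 A b ↔
      ∀ k, (b k : 𝕜) - R k ≤ A k (Fin.last n) * s := by
    intro s
    simp only [mem_ratPolyhedron, Fin.sum_univ_castSucc, Fin.snoc_castSucc,
      Fin.snoc_last, R, sub_le_iff_le_add']
  have hinit : y ∈ Fin.init '' ratPolyhedron 𝕜 A b ↔ ∃ s, Fin.snoc y s ∈ ratPolyhedron 𝕜 A b :=
    ⟨fun ⟨x, hx, hxy⟩ => ⟨x (Fin.last n), by rwa [← hxy, Fin.snoc_init_self]⟩,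
      fun ⟨s, hs⟩ => ⟨_, hs, Fin.init_snoc _ _⟩⟩
  have hcomb : ∀ k l, ∑ j : Fin n, ((A k (Fin.last n) * A l j.castSucc -
      A l (Fin.last n) * A k j.castSucc : ℚ) : 𝕜) * y j =
        A k (Fin.last n) * R l - A l (Fin.last n) * R k := by
    intro k l
    simp only [R, Finset.mul_sum, ← Finset.sum_sub_distrib]
    refine Finset.sum_congr rfl fun j _ => ?_
    push_cast
    ring
  rw [hinit]
  simp only [hsnoc]
  rw [exists_forall_le_mul_iff, mem_ratPolyhedron]
  simp only [Index, Sum.forall, Subtype.forall, Prod.forall, elimMatrix, elimVec,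
    Rat.cast_eq_zero, Rat.cast_pos, Rat.cast_lt_zero, and_imp, hcomb]
  refine and_congr (forall₂_congr fun k _ => sub_nonpos) (forall₂_congr fun k l => ?_)
  refine imp_congr_right fun _ => imp_congr_right fun _ => ?_
  push_cast
  constructor <;> intro h <;> linarith

theorem exists_image_eval_zero_eq_setOf [Finite σ] :
    ∃ (τ : Type) (_ : Finite τ) (α β : τ → ℚ),
      (· 0) '' ratPolyhedron 𝕜 A b = {t | ∀ k, (β k : 𝕜) ≤ α k * t} := by
  induction n generalizing σ with
  | zero =>
    refine ⟨σ, inferInstance, fun k => A k 0, b,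
      Set.ext fun t => ⟨?_, fun ht => ⟨fun _ => t, ?_, rfl⟩⟩⟩
    · rintro ⟨x, hx, rfl⟩
      simpa [mem_ratPolyhedron, mul_comm] using hx
    · simpa [mem_ratPolyhedron, mul_comm] using ht
  | succ n ih =>
    obtain ⟨τ, _, α, β, h⟩ := ih (elimMatrix A) (elimVec A b)
    refine ⟨τ, inferInstance, α, β, ?_⟩
    rw [← h, ← image_init_ratPolyhedron, Set.image_image]
    simp [Fin.init]

end FourierMotzkin

theorem exists_rat_isLeast_setOf_le_mul {τ : Type*} [Finite τ] {α β : τ → ℚ}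
    (hne : {t : 𝕜 | ∀ k, (β k : 𝕜) ≤ α k * t}.Nonempty)
    (hbdd : BddBelow {t : 𝕜 | ∀ k, (β k : 𝕜) ≤ α k * t}) :
    ∃ q : ℚ, IsLeast {t : 𝕜 | ∀ k, (β k : 𝕜) ≤ α k * t} q := by
  obtain ⟨t₀, ht₀⟩ := hne
  by_cases hpos : ∃ k, 0 < α k
  · obtain ⟨k, hk⟩ := hpos
    have : Nonempty {k // 0 < α k} := ⟨⟨k, hk⟩⟩
    obtain ⟨⟨k₀, hk₀⟩, hmax⟩ := Finite.exists_max fun k : {k // 0 < α k} => β k / α k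
    have hlower : ∀ t ∈ {t : 𝕜 | ∀ k, (β k : 𝕜) ≤ α k * t}, ((β k₀ / α k₀ : ℚ) : 𝕜) ≤ t := by
      intro t ht
      rw [Rat.cast_div, div_le_iff₀ (Rat.cast_pos.2 hk₀), mul_comm]
      exact ht k₀
    refine ⟨β k₀ / α k₀, fun k => ?_, hlower⟩
    rcases lt_trichotomy (α k) 0 with hk | hk | hk
    · have hq : (α k : 𝕜) * t₀ ≤ α k * ((β k₀ / α k₀ : ℚ) : 𝕜) :=
        mul_le_mul_of_nonpos_left (hlower t₀ ht₀) (Rat.cast_nonpos.2 hk.le)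
      exact (ht₀ k).trans hq
    · simpa [hk] using ht₀ k
    · have hk' : β k ≤ α k * (β k₀ / α k₀) := by
        rw [← div_le_iff₀' hk]
        exact hmax ⟨k, hk⟩
      exact_mod_cast hk'
  · push Not at hpos
    obtain ⟨lb, hlb⟩ := hbdd
    have hmem : min t₀ (lb - 1) ∈ {t : 𝕜 | ∀ k, (β k : 𝕜) ≤ α k * t} := fun k =>
      (ht₀ k).trans (mul_le_mul_of_nonpos_left (min_le_left _ _) (Rat.cast_nonpos.2 (hpos k)))
    linarith [hlb hmem, min_le_right t₀ (lb - 1)]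

def graphMatrix {σ : Type} {n : ℕ} (A : Matrix σ (Fin n) ℚ) (c : Fin n → ℚ) :
    Matrix (σ ⊕ Bool) (Fin (n + 1)) ℚ
  | .inl k => Fin.cons 0 (A k)
  | .inr true => Fin.cons 1 (-c)
  | .inr false => Fin.cons (-1) c

theorem image_ratPolyhedron_eq_image_eval_zero {σ : Type} {n : ℕ} (A : Matrix σ (Fin n) ℚ)
    (b : σ → ℚ) (c : Fin n → ℚ) :
    (fun x => ∑ j, (c j : 𝕜) * x j) '' ratPolyhedron 𝕜 A b =
      (· 0) '' ratPolyhedron 𝕜 (graphMatrix A c) (Sum.elim b 0) := by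
  have hmem : ∀ t x, Fin.cons t x ∈ ratPolyhedron 𝕜 (graphMatrix A c) (Sum.elim b 0) ↔
      x ∈ ratPolyhedron 𝕜 A b ∧ t = ∑ j, (c j : 𝕜) * x j := by
    intro t x
    simp only [mem_ratPolyhedron, Sum.forall, Bool.forall_bool, graphMatrix, Fin.sum_univ_succ,
      Fin.cons_zero, Fin.cons_succ, Sum.elim_inl, Sum.elim_inr, Pi.zero_apply, Pi.neg_apply]
    push_cast
    simp only [zero_mul, zero_add, neg_mul, one_mul, Finset.sum_neg_distrib]
    constructor
    · rintro ⟨hx, h₁, h₂⟩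
      exact ⟨hx, by linarith⟩
    · rintro ⟨hx, rfl⟩
      exact ⟨hx, by linarith, by linarith⟩
  ext t
  constructor
  · rintro ⟨x, hx, rfl⟩
    exact ⟨Fin.cons _ x, (hmem _ x).2 ⟨hx, rfl⟩, rfl⟩
  · rintro ⟨z, hz, rfl⟩
    rw [← Fin.cons_self_tail z, hmem] at hz
    exact ⟨_, hz.1, hz.2.symm⟩

theorem exists_rat_isLeast_image_ratPolyhedron {σ : Type} [Finite σ] {n : ℕ}
    (A : Matrix σ (Fin n) ℚ) (b : σ → ℚ) (c : Fin n → ℚ)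
    (hne : (ratPolyhedron 𝕜 A b).Nonempty)
    (hbdd : BddBelow ((fun x => ∑ j, (c j : 𝕜) * x j) '' ratPolyhedron 𝕜 A b)) :
    ∃ q : ℚ, IsLeast ((fun x => ∑ j, (c j : 𝕜) * x j) '' ratPolyhedron 𝕜 A b) q := by
  obtain ⟨τ, _, α, β, h⟩ :=
    FourierMotzkin.exists_image_eval_zero_eq_setOf (𝕜 := 𝕜) (graphMatrix A c) (Sum.elim b 0)
  rw [image_ratPolyhedron_eq_image_eval_zero, h] at hbdd ⊢
  refine exists_rat_isLeast_setOf_le_mul ?_ hbdd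
  rw [← h, ← image_ratPolyhedron_eq_image_eval_zero]
  exact hne.image _

theorem openSegment_subset_setOf_lt_mulVec {ι κ : Type*} [Fintype κ] {M : Matrix ι κ 𝕜}
    {u : ι → 𝕜} {x z : κ → 𝕜} (hx : u ≤ M *ᵥ x) (hz : ∀ i, u i < (M *ᵥ z) i) :
    openSegment 𝕜 x z ⊆ {y | ∀ i, u i < (M *ᵥ y) i} := by
  rintro _ ⟨s, t, hs, ht, hst, rfl⟩ i
  simp only [Matrix.mulVec_add, Matrix.mulVec_smul, Pi.add_apply, Pi.smul_apply, smul_eq_mul]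
  calc u i = s * u i + t * u i := by rw [← add_mul, hst, one_mul]
    _ < s * (M *ᵥ x) i + t * (M *ᵥ z) i :=
      add_lt_add_of_le_of_lt (mul_le_mul_of_nonneg_left (hx i) hs.le)
        (mul_lt_mul_of_pos_left (hz i) ht)

theorem setOf_le_subset_closure_setOf_lt {ι ι' κ : Type*} [Fintype κ] {A : Matrix ι κ ℝ}
    {B : Matrix ι' κ ℝ} {a : ι → ℝ} {b : ι' → ℝ}
    (hne : {x | a ≤ A *ᵥ x ∧ ∀ i, b i < (B *ᵥ x) i}.Nonempty) :
    {x | a ≤ A *ᵥ x ∧ b ≤ B *ᵥ x} ⊆ closure {x | a ≤ A *ᵥ x ∧ ∀ i, b i < (B *ᵥ x) i} := by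
  obtain ⟨z, hzA, hzB⟩ := hne
  rintro x ⟨hxA, hxB⟩
  have hseg : openSegment ℝ x z ⊆ {x | a ≤ A *ᵥ x ∧ ∀ i, b i < (B *ᵥ x) i} := fun y hy =>
    ⟨((convex_Ici a).linear_preimage A.mulVecLin).openSegment_subset hxA hzA hy,
      openSegment_subset_setOf_lt_mulVec hxB hzB hy⟩
  exact closure_mono hseg (segment_subset_closure_openSegment (left_mem_segment ℝ x z))

theorem iInf_subtype_eq_of_subset_closure {X α : Type*} [TopologicalSpace X]
    [CompleteLinearOrder α] [TopologicalSpace α] [ClosedIciTopology α] {g : X → α}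
    (hg : Continuous g) {s t : Set X} (hst : s ⊆ t) (hts : t ⊆ closure s) :
    ⨅ x : s, g x = ⨅ x : t, g x := by
  refine le_antisymm (le_iInf fun x => ?_)
    (le_iInf fun x => iInf_le_of_le (⟨x, hst x.2⟩ : t) le_rfl)
  have hclosed : IsClosed {y | ⨅ x : s, g x ≤ g y} := isClosed_Ici.preimage hg
  exact closure_minimal (fun y hy => iInf_le _ (⟨y, hy⟩ : s)) hclosed (hts x.2)

theorem iInf_subtype_eq_of_isLeast {X α : Type*} [CompleteLattice α] {g : X → α} {s : Set X}
    {a : α} (h : IsLeast (g '' s) a) : ⨅ x : s, g x = a := by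
  obtain ⟨⟨x₀, hx₀, rfl⟩, hlower⟩ := h
  exact le_antisymm (iInf_le _ (⟨x₀, hx₀⟩ : s)) (le_iInf fun x => hlower ⟨x, x.2, rfl⟩)

/-- if the infimum of a rational linear function over a nonempty
rational generalized polyhedron Q = {x : A x ≥ a, B x > b} is finite, it equals
the infimum over the weak-inequality closure {x : A x ≥ a, B x ≥ b}, and this
common value is rational. -/
theorem stmt_17 {n m m' : ℕ}
    (A : Matrix (Fin m) (Fin n) ℚ) (B : Matrix (Fin m') (Fin n) ℚ)
    (a : Fin m → ℚ) (b : Fin m' → ℚ) (c : Fin n → ℚ)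
    (Q : Set (Fin n → ℝ))
    (hQ : Q = {x | (fun i => (a i : ℝ)) ≤ (A.map ((↑·) : ℚ → ℝ)).mulVec x ∧
                   ∀ i, (b i : ℝ) < (B.map ((↑·) : ℚ → ℝ)).mulVec x i})
    (hne : Q.Nonempty)
    (v : EReal)
    (hv : v = ⨅ x : {x : Fin n → ℝ // x ∈ Q},
      ((∑ j, (c j : ℝ) * (x : Fin n → ℝ) j : ℝ) : EReal))
    (hfin : v ≠ ⊤ ∧ v ≠ ⊥) :
    v = (⨅ x : {x : Fin n → ℝ //
          (fun i => (a i : ℝ)) ≤ (A.map ((↑·) : ℚ → ℝ)).mulVec x ∧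
          (fun i => (b i : ℝ)) ≤ (B.map ((↑·) : ℚ → ℝ)).mulVec x},
        ((∑ j, (c j : ℝ) * (x : Fin n → ℝ) j : ℝ) : EReal)) ∧
    ∃ q : ℚ, v = ((q : ℝ) : EReal) := by
  subst hQ
  have hQP : ∀ x, (fun i => (a i : ℝ)) ≤ (A.map ((↑·) : ℚ → ℝ)).mulVec x ∧
      (∀ i, (b i : ℝ) < (B.map ((↑·) : ℚ → ℝ)).mulVec x i) →
      (fun i => (a i : ℝ)) ≤ (A.map ((↑·) : ℚ → ℝ)).mulVec x ∧
      (fun i => (b i : ℝ)) ≤ (B.map ((↑·) : ℚ → ℝ)).mulVec x :=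
    fun x hx => ⟨hx.1, fun i => (hx.2 i).le⟩
  have hinf := iInf_subtype_eq_of_subset_closure
    (g := fun x : Fin n → ℝ => ((∑ j, (c j : ℝ) * x j : ℝ) : EReal))
    (continuous_coe_real_ereal.comp (by fun_prop)) hQP (setOf_le_subset_closure_setOf_lt hne)
  refine ⟨hv.trans hinf, ?_⟩
  have hP : {x : Fin n → ℝ | (fun i => (a i : ℝ)) ≤ (A.map ((↑·) : ℚ → ℝ)).mulVec x ∧
      (fun i => (b i : ℝ)) ≤ (B.map ((↑·) : ℚ → ℝ)).mulVec x} =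
      ratPolyhedron ℝ (Matrix.fromRows A B) (Sum.elim a b) := by
    ext x
    simp [mem_ratPolyhedron, Pi.le_def, Matrix.mulVec, dotProduct]
  obtain ⟨r, rfl⟩ : ∃ r : ℝ, v = r := ⟨v.toReal, (EReal.coe_toReal hfin.1 hfin.2).symm⟩
  have hbdd : BddBelow ((fun x => ∑ j, (c j : ℝ) * x j) ''
      ratPolyhedron ℝ (Matrix.fromRows A B) (Sum.elim a b)) := by
    refine ⟨r, ?_⟩
    rintro _ ⟨x, hx, rfl⟩
    rw [← hP] at hx
    exact EReal.coe_le_coe_iff.1 ((hv.trans hinf).le.trans (iInf_le _ (⟨x, hx⟩ : {x // _})))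
  obtain ⟨q, hq⟩ := exists_rat_isLeast_image_ratPolyhedron _ _ c (hP ▸ hne.mono hQP) hbdd
  have hq' := EReal.coe_strictMono.monotone.map_isLeast hq
  rw [Set.image_image, ← hP] at hq'
  exact ⟨q, hv.trans (hinf.trans (iInf_subtype_eq_of_isLeast hq'))⟩
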